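/- arXiv:2505.13284 — 5 statements merged into one kernel-verified Lean document; each statement's English description precedes it below -/
import Mathlib

section
/- The cut rule is admissible in the sequent calculus IMLL: if Γ ⊢ A and A,Δ ⊢ C are derivable in IMLL (without cut), then Γ,Δ ⊢ C is derivable in IMLL (without cut). -/
/-- IMLL formulas: A ::= a | 1 | A⊗A | A⊸A. -/
inductive IMLLF : Type
  | atom : ℕ → IMLLF
  | one : IMLLF
  | tens : IMLLF → IMLLF → IMLLF
  | limp : IMLLF → IMLLF → IMLLF

open IMLLF

/-- The sequent calculus IMLL, on sequents Γ ⊢ A with Γ a multiset of formulas. -/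
inductive IMLL : Multiset IMLLF → IMLLF → Prop
  | ax (a : ℕ) : IMLL {atom a} (atom a)
  | impR {Γ : Multiset IMLLF} {A B : IMLLF} :
      IMLL (A ::ₘ Γ) B → IMLL Γ (limp A B)
  | impL {Γ Δ : Multiset IMLLF} {A B C : IMLLF} :
      IMLL Γ A → IMLL (B ::ₘ Δ) C → IMLL (limp A B ::ₘ (Γ + Δ)) C
  | oneR : IMLL 0 one
  | oneL {Γ : Multiset IMLLF} {A : IMLLF} :
      IMLL Γ A → IMLL (one ::ₘ Γ) A
  | tensL {Γ : Multiset IMLLF} {A B C : IMLLF} :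
      IMLL (A ::ₘ B ::ₘ Γ) C → IMLL (tens A B ::ₘ Γ) C
  | tensR {Γ Δ : Multiset IMLLF} {A B : IMLLF} :
      IMLL Γ A → IMLL Δ B → IMLL (Γ + Δ) (tens A B)

/-- Size of a formula. -/
def IMLLF.sz : IMLLF → ℕ
  | .atom _ => 1
  | .one => 1
  | .tens A B => A.sz + B.sz + 1
  | .limp A B => A.sz + B.sz + 1

lemma IMLLF.sz_pos (A : IMLLF) : 0 < A.sz := by cases A <;> simp [IMLLF.sz]

/-- Height-indexed version of IMLL. -/
inductive IMLLn : ℕ → Multiset IMLLF → IMLLF → Prop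
  | ax (a : ℕ) : IMLLn 1 {atom a} (atom a)
  | impR {n : ℕ} {Γ : Multiset IMLLF} {A B : IMLLF} :
      IMLLn n (A ::ₘ Γ) B → IMLLn (n+1) Γ (limp A B)
  | impL {n m : ℕ} {Γ Δ : Multiset IMLLF} {A B C : IMLLF} :
      IMLLn n Γ A → IMLLn m (B ::ₘ Δ) C → IMLLn (n+m+1) (limp A B ::ₘ (Γ + Δ)) C
  | oneR : IMLLn 1 0 one
  | oneL {n : ℕ} {Γ : Multiset IMLLF} {A : IMLLF} :
      IMLLn n Γ A → IMLLn (n+1) (one ::ₘ Γ) A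
  | tensL {n : ℕ} {Γ : Multiset IMLLF} {A B C : IMLLF} :
      IMLLn n (A ::ₘ B ::ₘ Γ) C → IMLLn (n+1) (tens A B ::ₘ Γ) C
  | tensR {n m : ℕ} {Γ Δ : Multiset IMLLF} {A B : IMLLF} :
      IMLLn n Γ A → IMLLn m Δ B → IMLLn (n+m+1) (Γ + Δ) (tens A B)

lemma IMLLn.toIMLL {n : ℕ} {Γ : Multiset IMLLF} {A : IMLLF} (h : IMLLn n Γ A) :
    IMLL Γ A := by
  induction h with
  | ax a => exact .ax a
  | impR _ ih => exact .impR ih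
  | impL _ _ ih₁ ih₂ => exact .impL ih₁ ih₂
  | oneR => exact .oneR
  | oneL _ ih => exact .oneL ih
  | tensL _ ih => exact .tensL ih
  | tensR _ _ ih₁ ih₂ => exact .tensR ih₁ ih₂

lemma IMLL.toN {Γ : Multiset IMLLF} {A : IMLLF} (h : IMLL Γ A) : ∃ n, IMLLn n Γ A := by
  induction h with
  | ax a => exact ⟨1, .ax a⟩
  | impR _ ih => obtain ⟨n, hn⟩ := ih; exact ⟨n+1, .impR hn⟩
  | impL _ _ ih₁ ih₂ =>
      obtain ⟨n, h1⟩ := ih₁; obtain ⟨m, h2⟩ := ih₂; exact ⟨n+m+1, .impL h1 h2⟩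
  | oneR => exact ⟨1, .oneR⟩
  | oneL _ ih => obtain ⟨n, hn⟩ := ih; exact ⟨n+1, .oneL hn⟩
  | tensL _ ih => obtain ⟨n, hn⟩ := ih; exact ⟨n+1, .tensL hn⟩
  | tensR _ _ ih₁ ih₂ =>
      obtain ⟨n, h1⟩ := ih₁; obtain ⟨m, h2⟩ := ih₂; exact ⟨n+m+1, .tensR h1 h2⟩

lemma IMLLn.pos {n : ℕ} {Γ : Multiset IMLLF} {A : IMLLF} (h : IMLLn n Γ A) : 0 < n := by
  cases h <;> omega

lemma IMLL.cut_core (A : IMLLF)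
    (ihA : ∀ B : IMLLF, B.sz < A.sz → ∀ (Γ Δ : Multiset IMLLF) (C : IMLLF),
      IMLL Γ B → IMLL (B ::ₘ Δ) C → IMLL (Γ + Δ) C) :
    ∀ (k n m : ℕ) (Γ Θ : Multiset IMLLF) (C : IMLLF), n + m ≤ k →
      IMLLn n Γ A → IMLLn m Θ C → ∀ Δ, Θ = A ::ₘ Δ → IMLL (Γ + Δ) C := by
  intro k
  induction k with
  | zero =>
    intro n m Γ Θ C hk h₁ _ Δ _
    have := h₁.pos; omega
  | succ k IH =>
    intro n m Γ Θ C hk h₁ h₂ Δ hΘ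
    cases h₂ with
    | ax a =>
      -- hΘ : {atom a} = A ::ₘ Δ
      have hA : A = atom a := by
        have := Multiset.mem_cons_self A Δ
        rw [← hΘ, Multiset.mem_singleton] at this
        exact this
      subst hA
      have hΔ : Δ = 0 := by
        have h0 : (atom a) ::ₘ (0 : Multiset IMLLF) = atom a ::ₘ Δ := by
          simpa using hΘ
        exact ((Multiset.cons_inj_right _).mp h0).symm
      subst hΔ
      simpa using h₁.toIMLL
    | oneR => exact absurd hΘ.symm (Multiset.cons_ne_zero)
    | @impR m' G X Y q =>
      subst hΘ
      have h := IH n m' Γ _ _ (by omega) h₁ q (X ::ₘ Δ) (Multiset.cons_swap _ _ _)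
      rw [Multiset.add_cons] at h
      exact IMLL.impR h
    | @oneL m' S C' q =>
      rcases Multiset.cons_eq_cons.mp hΘ with ⟨hA, hΔ⟩ | ⟨-, S', hS, hΔ⟩
      · subst hA; subst hΔ
        -- principal: A = one, q : Δ ⊢ C
        cases h₁ with
        | oneR => simpa using q.toIMLL
        | oneL p =>
          have h := IH _ _ _ _ _ (by omega) p (IMLLn.oneL q) _ rfl
          rw [Multiset.cons_add]
          exact IMLL.oneL h
        | tensL p =>
          have h := IH _ _ _ _ _ (by omega) p (IMLLn.oneL q) _ rfl
          rw [Multiset.cons_add]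
          apply IMLL.tensL
          rwa [Multiset.cons_add, Multiset.cons_add] at h
        | impL p₁ p₂ =>
          have h := IH _ _ _ _ _ (by omega) p₂ (IMLLn.oneL q) _ rfl
          rw [Multiset.cons_add] at h
          rw [Multiset.cons_add, add_assoc]
          exact IMLL.impL p₁.toIMLL h
      · subst hS; subst hΔ
        have h := IH _ _ _ _ _ (by omega) h₁ q S' rfl
        rw [Multiset.add_cons]
        exact IMLL.oneL h
    | @tensL m' S X Y C' q =>
      rcases Multiset.cons_eq_cons.mp hΘ with ⟨hA, hΔ⟩ | ⟨-, S', hS, hΔ⟩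
      · subst hA; subst hΔ
        -- principal: A = tens X Y, q : X ::ₘ Y ::ₘ Δ ⊢ C
        cases h₁ with
        | tensR p₁ p₂ =>
          have c₁ : IMLL _ C := ihA Y (by simp [IMLLF.sz]) _ (X ::ₘ S) C
            p₂.toIMLL (Multiset.cons_swap X Y S ▸ q.toIMLL)
          rw [Multiset.add_cons] at c₁
          have c₂ := ihA X (by simp [IMLLF.sz]) _ _ C p₁.toIMLL c₁
          rw [add_assoc]
          exact c₂
        | oneL p =>
          have h := IH _ _ _ _ _ (by omega) p (IMLLn.tensL q) _ rfl
          rw [Multiset.cons_add]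
          exact IMLL.oneL h
        | tensL p =>
          have h := IH _ _ _ _ _ (by omega) p (IMLLn.tensL q) _ rfl
          rw [Multiset.cons_add]
          apply IMLL.tensL
          rwa [Multiset.cons_add, Multiset.cons_add] at h
        | impL p₁ p₂ =>
          have h := IH _ _ _ _ _ (by omega) p₂ (IMLLn.tensL q) _ rfl
          rw [Multiset.cons_add] at h
          rw [Multiset.cons_add, add_assoc]
          exact IMLL.impL p₁.toIMLL h
      · subst hS; subst hΔ
        -- q : X ::ₘ Y ::ₘ A ::ₘ S' ⊢ C
        have h := IH _ _ _ _ _ (by omega) h₁ q (X ::ₘ Y ::ₘ S')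
          (by rw [Multiset.cons_swap Y A, Multiset.cons_swap X A])
        rw [Multiset.add_cons, Multiset.add_cons] at h
        rw [Multiset.add_cons]
        exact IMLL.tensL h
    | @impL m₁ m₂ S₁ S₂ X Y C' q₁ q₂ =>
      rcases Multiset.cons_eq_cons.mp hΘ with ⟨hA, hΔ⟩ | ⟨-, S', hS, hΔ⟩
      · subst hA; subst hΔ
        -- principal: A = limp X Y
        cases h₁ with
        | impR p =>
          have c₁ : IMLL (S₁ + Γ) Y :=
            ihA X (by simp [IMLLF.sz]) _ _ _ q₁.toIMLL p.toIMLL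
          have c₂ : IMLL ((S₁ + Γ) + S₂) C :=
            ihA Y (by simp [IMLLF.sz]) _ _ _ c₁ q₂.toIMLL
          rwa [add_comm S₁ Γ, add_assoc] at c₂
        | oneL p =>
          have h := IH _ _ _ _ _ (by omega) p (IMLLn.impL q₁ q₂) _ rfl
          rw [Multiset.cons_add]
          exact IMLL.oneL h
        | tensL p =>
          have h := IH _ _ _ _ _ (by omega) p (IMLLn.impL q₁ q₂) _ rfl
          rw [Multiset.cons_add]
          apply IMLL.tensL
          rwa [Multiset.cons_add, Multiset.cons_add] at h
        | impL p₁ p₂ =>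
          have h := IH _ _ _ _ _ (by omega) p₂ (IMLLn.impL q₁ q₂) _ rfl
          rw [Multiset.cons_add] at h
          rw [Multiset.cons_add, add_assoc]
          exact IMLL.impL p₁.toIMLL h
      · subst hΔ
        have hmem : A ∈ S₁ ∨ A ∈ S₂ := by
          rw [← Multiset.mem_add, hS]; exact Multiset.mem_cons_self _ _
        rcases hmem with hA | hA
        · obtain ⟨S₁', rfl⟩ := Multiset.exists_cons_of_mem hA
          have hS' : S₁' + S₂ = S' := by
            have h0 : A ::ₘ (S₁' + S₂) = A ::ₘ S' := by rw [← Multiset.cons_add]; exact hS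
            exact (Multiset.cons_inj_right _).mp h0
          subst hS'
          have h := IH _ _ _ _ _ (by omega) h₁ q₁ S₁' rfl
          have h2 := IMLL.impL h q₂.toIMLL
          rw [Multiset.add_cons, ← add_assoc]
          exact h2
        · obtain ⟨S₂', rfl⟩ := Multiset.exists_cons_of_mem hA
          have hS' : S₁ + S₂' = S' := by
            have h0 : A ::ₘ (S₁ + S₂') = A ::ₘ S' := by rw [← Multiset.add_cons]; exact hS
            exact (Multiset.cons_inj_right _).mp h0
          subst hS'
          have h := IH _ _ _ _ _ (by omega) h₁ q₂ (Y ::ₘ S₂') (Multiset.cons_swap _ _ _)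
          rw [Multiset.add_cons] at h
          have h2 := IMLL.impL q₁.toIMLL h
          rw [Multiset.add_cons, add_left_comm]
          exact h2
    | @tensR m₁ m₂ S₁ S₂ X Y q₁ q₂ =>
      -- hΘ : S₁ + S₂ = A ::ₘ Δ
      have hmem : A ∈ S₁ ∨ A ∈ S₂ := by
        rw [← Multiset.mem_add, hΘ]; exact Multiset.mem_cons_self _ _
      rcases hmem with hA | hA
      · obtain ⟨S₁', rfl⟩ := Multiset.exists_cons_of_mem hA
        have hΔ : S₁' + S₂ = Δ := by
          have h0 : A ::ₘ (S₁' + S₂) = A ::ₘ Δ := by rw [← Multiset.cons_add]; exact hΘ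
          exact (Multiset.cons_inj_right _).mp h0
        subst hΔ
        have h := IH _ _ _ _ _ (by omega) h₁ q₁ S₁' rfl
        have h2 := IMLL.tensR h q₂.toIMLL
        rwa [add_assoc] at h2
      · obtain ⟨S₂', rfl⟩ := Multiset.exists_cons_of_mem hA
        have hΔ : S₁ + S₂' = Δ := by
          have h0 : A ::ₘ (S₁ + S₂') = A ::ₘ Δ := by rw [← Multiset.add_cons]; exact hΘ
          exact (Multiset.cons_inj_right _).mp h0
        subst hΔ
        have h := IH _ _ _ _ _ (by omega) h₁ q₂ S₂' rfl
        have h2 := IMLL.tensR q₁.toIMLL h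
        rwa [add_left_comm] at h2

lemma IMLL.cut_sz :
    ∀ (s : ℕ) (A : IMLLF), A.sz ≤ s → ∀ (Γ Δ : Multiset IMLLF) (C : IMLLF),
      IMLL Γ A → IMLL (A ::ₘ Δ) C → IMLL (Γ + Δ) C := by
  intro s
  induction s with
  | zero =>
    intro A hA
    have := A.sz_pos; omega
  | succ s IHs =>
    intro A hA Γ Δ C h₁ h₂
    obtain ⟨n, h₁'⟩ := h₁.toN
    obtain ⟨m, h₂'⟩ := h₂.toN
    exact IMLL.cut_core A (fun B hB => IHs B (by omega)) (n+m) n m Γ _ C le_rfl h₁' h₂' Δ rfl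

/-- Cut is admissible in IMLL: if Γ ⊢ A and A,Δ ⊢ C are derivable (cut-free),
    then so is Γ,Δ ⊢ C. -/
theorem IMLL.cut_admissible {Γ Δ : Multiset IMLLF} {A C : IMLLF}
    (h₁ : IMLL Γ A) (h₂ : IMLL (A ::ₘ Δ) C) : IMLL (Γ + Δ) C :=
  IMLL.cut_sz A.sz A le_rfl Γ Δ C h₁ h₂
end

section
/- In the deep inference system IBV, the general identity rule i↓ (proving 1 implies A⊸A for any formula A, in positive context) is derivable: for every formula A there is a positive IBV derivation from premise 1 to conclusion A⊸A. -/
/-- IBV formulas: A ::= a | 1 | A⊗A | A⊸A | A◁A. -/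
inductive IBVF : Type
  | atom : ℕ → IBVF
  | one : IBVF
  | tens : IBVF → IBVF → IBVF
  | limp : IBVF → IBVF → IBVF
  | seq : IBVF → IBVF → IBVF

open IBVF

/-- The inference rules of the deep inference system IBV, rewriting the premise
    to the conclusion.  The Boolean index is the polarity of the context where
    the rule may be applied: `true` = positive (∘-rules), `false` = negative
    (•-rules); rules with a universally quantified polarity apply in both. -/
inductive IBVRule : Bool → IBVF → IBVF → Prop
  | ai_down (a : ℕ) : IBVRule true one (limp (atom a) (atom a))
  | u_down_seqL (A : IBVF) : IBVRule true A (seq one A)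
  | u_down_seqR (A : IBVF) : IBVRule true A (seq A one)
  | ref_pos (A B : IBVF) : IBVRule true (tens A B) (seq A B)
  | ref_neg (A B : IBVF) : IBVRule false (seq A B) (tens A B)
  | sL_pos (A B C : IBVF) : IBVRule true (tens A (limp B C)) (limp (limp A B) C)
  | sR_pos (A B C : IBVF) : IBVRule true (tens (limp A B) C) (limp A (tens B C))
  | sL_neg (A B C : IBVF) : IBVRule false (limp (limp A B) C) (tens A (limp B C))
  | sR_neg (A B C : IBVF) : IBVRule false (limp A (tens B C)) (tens (limp A B) C)
  | sqL_pos (A B C : IBVF) : IBVRule true (seq (limp A B) C) (limp A (seq B C))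
  | sqR_pos (A B C : IBVF) : IBVRule true (seq B (limp A C)) (limp A (seq B C))
  | sqL_neg (A B C : IBVF) : IBVRule false (seq (tens A B) C) (tens A (seq B C))
  | sqR_neg (A B C : IBVF) : IBVRule false (seq B (tens A C)) (tens A (seq B C))
  | q_down_pos (A B C D : IBVF) :
      IBVRule true (seq (limp A B) (limp C D)) (limp (seq A C) (seq B D))
  | q_down_neg (A B C D : IBVF) :
      IBVRule false (seq (tens A B) (tens C D)) (tens (seq A C) (seq B D))
  | com_tens (p : Bool) (A B : IBVF) : IBVRule p (tens A B) (tens B A)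
  | asso_tens (p : Bool) (A B C : IBVF) :
      IBVRule p (tens (tens A B) C) (tens A (tens B C))
  | assoL_seq (p : Bool) (A B C : IBVF) :
      IBVRule p (seq (seq A B) C) (seq A (seq B C))
  | assoR_seq (p : Bool) (A B C : IBVF) :
      IBVRule p (seq A (seq B C)) (seq (seq A B) C)
  | u_down_tens (p : Bool) (A : IBVF) : IBVRule p A (tens one A)
  | u_down_limp (p : Bool) (A : IBVF) : IBVRule p A (limp one A)
  | cur (p : Bool) (A B C : IBVF) :
      IBVRule p (limp (tens A B) C) (limp A (limp B C))
  | ruc (p : Bool) (A B C : IBVF) :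
      IBVRule p (limp A (limp B C)) (limp (tens A B) C)

/-- The up-rules added to IBV to form the symmetric system SIBV. -/
inductive UpRule : Bool → IBVF → IBVF → Prop
  | ai_up (a : ℕ) : UpRule false (limp (atom a) (atom a)) one
  | u_up_seqL (A : IBVF) : UpRule false (seq one A) A
  | u_up_seqR (A : IBVF) : UpRule false (seq A one) A
  | u_up_tens (p : Bool) (A : IBVF) : UpRule p (tens one A) A
  | u_up_limp (p : Bool) (A : IBVF) : UpRule p (limp one A) A
  | q_up_pos (A B C D : IBVF) :
      UpRule true (tens (seq A C) (seq B D)) (seq (tens A B) (tens C D))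
  | q_up_neg (A B C D : IBVF) :
      UpRule false (limp (seq A C) (seq B D)) (seq (limp A B) (limp C D))

/-- The rules of the symmetric system SIBV: the IBV rules plus the up-rules. -/
def SIBVRule (p : Bool) (A B : IBVF) : Prop := IBVRule p A B ∨ UpRule p A B

/-- One deep rewrite step, for a given rule system `R`.  `Step R p X Y` means
    that `X` rewrites to `Y` by applying a rule of `R` at some position whose
    polarity (relative to the ambient polarity `p`) matches the rule's polarity
    annotation; polarity flips when descending into the left of a ⊸. -/
inductive Step (R : Bool → IBVF → IBVF → Prop) : Bool → IBVF → IBVF → Prop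
  | rule {p : Bool} {A B : IBVF} : R p A B → Step R p A B
  | tensL {p : Bool} {A A' B : IBVF} :
      Step R p A A' → Step R p (tens A B) (tens A' B)
  | tensR {p : Bool} {A B B' : IBVF} :
      Step R p B B' → Step R p (tens A B) (tens A B')
  | seqL {p : Bool} {A A' B : IBVF} :
      Step R p A A' → Step R p (seq A B) (seq A' B)
  | seqR {p : Bool} {A B B' : IBVF} :
      Step R p B B' → Step R p (seq A B) (seq A B')
  | limpL {p : Bool} {A A' B : IBVF} :
      Step R (!p) A A' → Step R p (limp A B) (limp A' B)
  | limpR {p : Bool} {A B B' : IBVF} :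
      Step R p B B' → Step R p (limp A B) (limp A B')

/-- A derivation of polarity `p` (`true` = positive, `false` = negative) in the
    system `R` from premise `X` to conclusion `Y`: a finite sequence of deep
    rewrite steps. -/
def Deriv (R : Bool → IBVF → IBVF → Prop) (p : Bool) : IBVF → IBVF → Prop :=
  Relation.ReflTransGen (Step R p)

/-- A formula is provable in IBV if there is a positive derivation from 1. -/
def IBVProvable (A : IBVF) : Prop := Deriv IBVRule true one A

/-- A formula is provable in SIBV if there is a positive derivation from 1. -/
def SIBVProvable (A : IBVF) : Prop := Deriv SIBVRule true one A

/-!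
Induction on `A`. Atoms are the rule ai↓ and `1` is u↓⊸. For `A ⊗ B` and `A ⊸ B` the two
identities are placed next to each other with a unit rule and merged by a switch (sR∘, resp.
sL• in the negative position) and (un)currying; for `A ◁ B` they are placed side by side in a
`◁` and merged by q↓∘.
-/

local infixr:60 " ⊸ " => limp
local infixl:70 " ⊗ " => tens
local infixl:70 " ◁ " => seq
local infix:40 " ⇒ " => Deriv IBVRule true

namespace Deriv

variable {R : Bool → IBVF → IBVF → Prop} {p : Bool}

instance : Trans (Deriv R p) (Deriv R p) (Deriv R p) := ⟨Relation.ReflTransGen.trans⟩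

theorem of_rule {A B : IBVF} (h : R p A B) : Deriv R p A B :=
  .single (.rule h)

theorem tens_left {A A' : IBVF} (B : IBVF) (h : Deriv R p A A') : Deriv R p (A ⊗ B) (A' ⊗ B) :=
  h.lift (· ⊗ B) fun _ _ => Step.tensL

theorem seq_left {A A' : IBVF} (B : IBVF) (h : Deriv R p A A') : Deriv R p (A ◁ B) (A' ◁ B) :=
  h.lift (· ◁ B) fun _ _ => Step.seqL

theorem seq_right (A : IBVF) {B B' : IBVF} (h : Deriv R p B B') : Deriv R p (A ◁ B) (A ◁ B') :=
  h.lift (A ◁ ·) fun _ _ => Step.seqR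

theorem limp_left {A A' : IBVF} (B : IBVF) (h : Deriv R (!p) A A') :
    Deriv R p (A ⊸ B) (A' ⊸ B) :=
  h.lift (· ⊸ B) fun _ _ => Step.limpL

theorem limp_right (A : IBVF) {B B' : IBVF} (h : Deriv R p B B') : Deriv R p (A ⊸ B) (A ⊸ B') :=
  h.lift (A ⊸ ·) fun _ _ => Step.limpR

end Deriv

namespace IBV

theorem identity_tens {A B : IBVF} (hA : one ⇒ A ⊸ A) (hB : one ⇒ B ⊸ B) :
    one ⇒ A ⊗ B ⊸ A ⊗ B :=
  calc one
    _ ⇒ A ⊸ A := hA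
    _ ⇒ A ⊸ one ⊗ A := .limp_right A (.of_rule (.u_down_tens true A))
    _ ⇒ A ⊸ (B ⊸ B) ⊗ A := .limp_right A (.tens_left A hB)
    _ ⇒ A ⊸ B ⊸ B ⊗ A := .limp_right A (.of_rule (.sR_pos B B A))
    _ ⇒ A ⊸ B ⊸ A ⊗ B := .limp_right A (.limp_right B (.of_rule (.com_tens true B A)))
    _ ⇒ A ⊗ B ⊸ A ⊗ B := .of_rule (.ruc true A B (A ⊗ B))

theorem identity_limp {A B : IBVF} (hA : one ⇒ A ⊸ A) (hB : one ⇒ B ⊸ B) :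
    one ⇒ (A ⊸ B) ⊸ A ⊸ B :=
  calc one
    _ ⇒ B ⊸ B := hB
    _ ⇒ (one ⊸ B) ⊸ B := .limp_left B (.of_rule (.u_down_limp false B))
    -- left of two `⊸`, the hole is positive again
    _ ⇒ ((A ⊸ A) ⊸ B) ⊸ B := .limp_left B (.limp_left B hA)
    _ ⇒ A ⊗ (A ⊸ B) ⊸ B := .limp_left B (.of_rule (.sL_neg A A B))
    _ ⇒ (A ⊸ B) ⊗ A ⊸ B := .limp_left B (.of_rule (.com_tens false A (A ⊸ B)))
    _ ⇒ (A ⊸ B) ⊸ A ⊸ B := .of_rule (.cur true (A ⊸ B) A B)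

theorem identity_seq {A B : IBVF} (hA : one ⇒ A ⊸ A) (hB : one ⇒ B ⊸ B) :
    one ⇒ A ◁ B ⊸ A ◁ B :=
  calc one
    _ ⇒ one ◁ one := .of_rule (.u_down_seqL one)
    _ ⇒ (A ⊸ A) ◁ one := .seq_left one hA
    _ ⇒ (A ⊸ A) ◁ (B ⊸ B) := .seq_right (A ⊸ A) hB
    _ ⇒ A ◁ B ⊸ A ◁ B := .of_rule (.q_down_pos A A B B)

end IBV

/-- The general identity rule i↓∘ is derivable in IBV: for every formula A there
    is a positive IBV derivation from 1 to A⊸A. -/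
theorem IBV.identity_derivable (A : IBVF) : Deriv IBVRule true one (limp A A) := by
  induction A with
  | atom a => exact .of_rule (.ai_down a)
  | one => exact .of_rule (.u_down_limp true one)
  | tens A B ihA ihB => exact IBV.identity_tens ihA ihB
  | limp A B ihA ihB => exact IBV.identity_limp ihA ihB
  | seq A B ihA ihB => exact IBV.identity_seq ihA ihB
end

section
/- In the symmetric deep inference system SIBV, the general cut rule i↑ (rewriting A⊸A to 1 in negative context) is derivable for every formula A. -/
open IBVF

namespace DerivHelpers

variable {R : Bool → IBVF → IBVF → Prop} {p : Bool} {A A' B B' : IBVF}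

theorem deriv_limpR (h : Deriv R p B B') : Deriv R p (limp A B) (limp A B') :=
  h.lift (limp A) fun _ _ s => Step.limpR s

theorem deriv_limpL (h : Deriv R (!p) A A') : Deriv R p (limp A B) (limp A' B) :=
  h.lift (fun X => limp X B) fun _ _ s => Step.limpL s

theorem deriv_tensL (h : Deriv R p A A') : Deriv R p (tens A B) (tens A' B) :=
  h.lift (fun X => tens X B) fun _ _ s => Step.tensL s

theorem deriv_seqL (h : Deriv R p A A') : Deriv R p (seq A B) (seq A' B) :=
  h.lift (fun X => seq X B) fun _ _ s => Step.seqL s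

theorem deriv_seqR (h : Deriv R p B B') : Deriv R p (seq A B) (seq A B') :=
  h.lift (seq A) fun _ _ s => Step.seqR s

end DerivHelpers

open DerivHelpers Relation.ReflTransGen in
/-- The general cut rule i↑• is derivable in SIBV: for every formula A there is
    a negative SIBV derivation from A⊸A to 1. -/
theorem SIBV.cut_derivable (A : IBVF) : Deriv SIBVRule false (limp A A) one := by
  induction A with
  | atom a => exact single (.rule (Or.inr (.ai_up a)))
  | one => exact single (.rule (Or.inr (.u_up_limp false one)))
  | tens A B ihA ihB =>
    -- (A⊗B)⊸(A⊗B) ⇒ A⊸(B⊸(A⊗B)) ⇒ A⊸(B⊸(B⊗A)) ⇒ A⊸((B⊸B)⊗A) ⇒ A⊸(1⊗A) ⇒ A⊸A ⇒ 1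
    refine (single (.rule (Or.inl (.cur false A B (tens A B))))).trans ?_
    refine (single (.limpR (.limpR (.rule (Or.inl (.com_tens false A B)))))).trans ?_
    refine (single (.limpR (.rule (Or.inl (.sR_neg B B A))))).trans ?_
    refine (deriv_limpR (deriv_tensL ihB)).trans ?_
    refine (single (.limpR (.rule (Or.inr (.u_up_tens false A))))).trans ihA
  | limp B C ihB ihC =>
    -- (B⊸C)⊸(B⊸C) ⇒ ((B⊸C)⊗B)⊸C ⇒ (B⊗(B⊸C))⊸C ⇒ ((B⊸B)⊸C)⊸C ⇒ (1⊸C)⊸C ⇒ C⊸C ⇒ 1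
    refine (single (.rule (Or.inl (.ruc false (limp B C) B C)))).trans ?_
    refine (single (.limpL (.rule (Or.inl (.com_tens true (limp B C) B))))).trans ?_
    refine (single (.limpL (.rule (Or.inl (.sL_pos B B C))))).trans ?_
    refine (deriv_limpL (p := false) (deriv_limpL (p := true) ihB)).trans ?_
    refine (single (.limpL (.rule (Or.inr (.u_up_limp true C))))).trans ihC
  | seq A B ihA ihB =>
    -- (A◁B)⊸(A◁B) ⇒ (A⊸A)◁(B⊸B) ⇒ 1◁(B⊸B) ⇒ 1◁1 ⇒ 1
    refine (single (.rule (Or.inr (.q_up_neg A A B B)))).trans ?_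
    refine (deriv_seqL ihA).trans ?_
    refine (deriv_seqR ihB).trans ?_
    exact single (.rule (Or.inr (.u_up_seqL one)))
end

section
/- Deduction theorem for SIBV: the formula A⊸B is provable in SIBV (i.e., there is a positive derivation from 1 to A⊸B) if and only if there is a positive derivation in SIBV with premise A and conclusion B. -/
open IBVF

namespace SIBVAux

open Relation

abbrev D (p : Bool) := Deriv SIBVRule p

lemma istep {p : Bool} {A B : IBVF} (h : IBVRule p A B) : D p A B :=
  ReflTransGen.single (Step.rule (Or.inl h))

lemma ustep {p : Bool} {A B : IBVF} (h : UpRule p A B) : D p A B :=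
  ReflTransGen.single (Step.rule (Or.inr h))

lemma dtensL {p : Bool} {A A' B : IBVF} (h : D p A A') :
    D p (tens A B) (tens A' B) := by
  induction h with
  | refl => exact ReflTransGen.refl
  | tail _ s ih => exact ih.tail (Step.tensL s)

lemma dtensR {p : Bool} {A B B' : IBVF} (h : D p B B') :
    D p (tens A B) (tens A B') := by
  induction h with
  | refl => exact ReflTransGen.refl
  | tail _ s ih => exact ih.tail (Step.tensR s)

lemma dseqL {p : Bool} {A A' B : IBVF} (h : D p A A') :
    D p (seq A B) (seq A' B) := by
  induction h with
  | refl => exact ReflTransGen.refl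
  | tail _ s ih => exact ih.tail (Step.seqL s)

lemma dseqR {p : Bool} {A B B' : IBVF} (h : D p B B') :
    D p (seq A B) (seq A B') := by
  induction h with
  | refl => exact ReflTransGen.refl
  | tail _ s ih => exact ih.tail (Step.seqR s)

lemma dlimpL {p : Bool} {A A' B : IBVF} (h : D (!p) A A') :
    D p (limp A B) (limp A' B) := by
  induction h with
  | refl => exact ReflTransGen.refl
  | tail _ s ih => exact ih.tail (Step.limpL s)

lemma dlimpR {p : Bool} {A B B' : IBVF} (h : D p B B') :
    D p (limp A B) (limp A B') := by
  induction h with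
  | refl => exact ReflTransGen.refl
  | tail _ s ih => exact ih.tail (Step.limpR s)

/-- Identity (positive) and co-identity (negative), by mutual structural
    induction. -/
lemma id_and_coid (A : IBVF) :
    D true one (limp A A) ∧ D false (limp A A) one := by
  induction A with
  | atom a => exact ⟨istep (.ai_down a), ustep (.ai_up a)⟩
  | one => exact ⟨istep (.u_down_limp true one), ustep (.u_up_limp false one)⟩
  | tens A B ihA ihB =>
    constructor
    · exact istep (.u_down_tens true one)
        |>.trans (dtensL ihA.1)
        |>.trans (dtensR ihB.1)
        |>.trans (istep (.sR_pos A A (limp B B)))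
        |>.trans (dlimpR (istep (.com_tens true A (limp B B))))
        |>.trans (dlimpR (istep (.sR_pos B B A)))
        |>.trans (dlimpR (dlimpR (istep (.com_tens true B A))))
        |>.trans (istep (.ruc true A B (tens A B)))
    · exact istep (.cur false A B (tens A B))
        |>.trans (dlimpR (dlimpR (istep (.com_tens false A B))))
        |>.trans (dlimpR (istep (.sR_neg B B A)))
        |>.trans (dlimpR (dtensL ihB.2))
        |>.trans (dlimpR (ustep (.u_up_tens false A)))
        |>.trans ihA.2
  | limp A B ihA ihB =>
    constructor
    · -- 1 → B⊸B → ((A⊸B)⊗A)⊸B → (A⊸B)⊸(A⊸B)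
      refine ihB.1 |>.trans (dlimpL ?_) |>.trans (istep (.cur true (limp A B) A B))
      -- coevaluation: B → (A⊸B)⊗A, negatively
      exact istep (.u_down_limp false B)
        |>.trans (dlimpL ihA.1)
        |>.trans (istep (.sL_neg A A B))
        |>.trans (istep (.com_tens false A (limp A B)))
    · -- (A⊸B)⊸(A⊸B) → ((A⊸B)⊗A)⊸B → B⊸B → 1
      refine istep (.ruc false (limp A B) A B) |>.trans (dlimpL ?_) |>.trans ihB.2
      -- evaluation: (A⊸B)⊗A → B, positively
      exact istep (.com_tens true (limp A B) A)
        |>.trans (istep (.sL_pos A A B))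
        |>.trans (dlimpL ihA.2)
        |>.trans (ustep (.u_up_limp true B))
  | seq A B ihA ihB =>
    constructor
    · exact istep (.u_down_seqL one)
        |>.trans (dseqL ihA.1)
        |>.trans (dseqR ihB.1)
        |>.trans (istep (.q_down_pos A A B B))
    · exact ustep (.q_up_neg A A B B)
        |>.trans (dseqL ihA.2)
        |>.trans (dseqR ihB.2)
        |>.trans (ustep (.u_up_seqL one))

end SIBVAux

/-- Deduction theorem for SIBV: A⊸B is provable in SIBV iff there is a positive
    SIBV derivation with premise A and conclusion B. -/
theorem SIBV.deduction (A B : IBVF) :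
    SIBVProvable (limp A B) ↔ Deriv SIBVRule true A B := by
  constructor
  · intro h
    -- A → 1⊗A → (A⊸B)⊗A → A⊗(A⊸B) → (A⊸A)⊸B → 1⊸B → B
    exact SIBVAux.istep (.u_down_tens true A)
      |>.trans (SIBVAux.dtensL h)
      |>.trans (SIBVAux.istep (.com_tens true (limp A B) A))
      |>.trans (SIBVAux.istep (.sL_pos A A B))
      |>.trans (SIBVAux.dlimpL (SIBVAux.id_and_coid A).2)
      |>.trans (SIBVAux.ustep (.u_up_limp true B))
  · intro h
    exact (SIBVAux.id_and_coid A).1.trans (SIBVAux.dlimpR h)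
end

section
/- In IBV, the following forms of monotonicity are equivalent for fixed formulas A and B: (1) A⊸B is provable; (2) P[A]⊸P[B] is provable for every positive context P; (3) N[B]⊸N[A] is provable for every negative context N. -/
open IBVF

/-- Contexts over IBV formulas: a formula with a single hole. -/
inductive Ctx : Type
  | hole : Ctx
  | tensL : Ctx → IBVF → Ctx
  | tensR : IBVF → Ctx → Ctx
  | limpL : Ctx → IBVF → Ctx
  | limpR : IBVF → Ctx → Ctx
  | seqL : Ctx → IBVF → Ctx
  | seqR : IBVF → Ctx → Ctx

/-- Polarity of the hole of a context: `true` = positive, `false` = negative.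
    Polarity flips on the left of ⊸. -/
def Ctx.pol : Ctx → Bool
  | .hole => true
  | .tensL C _ => C.pol
  | .tensR _ C => C.pol
  | .limpL C _ => !C.pol
  | .limpR _ C => C.pol
  | .seqL C _ => C.pol
  | .seqR _ C => C.pol

/-- Plugging a formula into the hole of a context. -/
def Ctx.fill : Ctx → IBVF → IBVF
  | .hole, X => X
  | .tensL C B, X => tens (C.fill X) B
  | .tensR A C, X => tens A (C.fill X)
  | .limpL C B, X => limp (C.fill X) B
  | .limpR A C, X => limp A (C.fill X)
  | .seqL C B, X => seq (C.fill X) B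
  | .seqR A C, X => seq A (C.fill X)

/-!
A provable `A ⊸ B` is pushed through a context one layer at a time, the polarity flipping on
the left of `⊸`; this gives (1) ⇒ (2) and (1) ⇒ (3). For (3) ⇒ (1), the negative context
`[] ⊸ B` yields `(B ⊸ B) ⊸ (A ⊸ B)`, so it suffices that provability is closed under modus
ponens, a form of cut admissibility. This is proved with a syntactic model: each formula `F`
is interpreted as a set `interp F` of formulas closed under negative derivations, such that
positive derivations enlarge interpretations (soundness) and every `X ∈ interp F` entails `F`
(adequacy). If `F ⊸ G` and `F` are provable, then `1 ∈ interp (F ⊸ G)` and `1 ∈ interp F`,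
hence `1 ∈ interp G`, and adequacy makes `G` provable.
-/

local infixr:60 " ⊸ " => limp
local infixr:70 " ⊗ " => tens
local infixr:70 " ◁ " => seq
local infix:50 " ⟶∘ " => Deriv IBVRule true
local infix:50 " ⟶• " => Deriv IBVRule false

section Deriv

variable {R : Bool → IBVF → IBVF → Prop} {p : Bool}

theorem Deriv.refl {X : IBVF} : Deriv R p X X := Relation.ReflTransGen.refl

theorem Deriv.trans {X Y Z : IBVF} (h₁ : Deriv R p X Y) (h₂ : Deriv R p Y Z) :
    Deriv R p X Z :=
  Relation.ReflTransGen.trans h₁ h₂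

instance : Trans (Deriv R p) (Deriv R p) (Deriv R p) := ⟨Deriv.trans⟩

theorem Deriv.rule {X Y : IBVF} (h : R p X Y) : Deriv R p X Y :=
  Relation.ReflTransGen.single (Step.rule h)

theorem Deriv.tensL {A A' B : IBVF} (h : Deriv R p A A') : Deriv R p (A ⊗ B) (A' ⊗ B) :=
  Relation.ReflTransGen.lift (· ⊗ B) (fun _ _ => Step.tensL) _ _ h

theorem Deriv.tensR {A B B' : IBVF} (h : Deriv R p B B') : Deriv R p (A ⊗ B) (A ⊗ B') :=
  Relation.ReflTransGen.lift (A ⊗ ·) (fun _ _ => Step.tensR) _ _ h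

theorem Deriv.seqL {A A' B : IBVF} (h : Deriv R p A A') : Deriv R p (A ◁ B) (A' ◁ B) :=
  Relation.ReflTransGen.lift (· ◁ B) (fun _ _ => Step.seqL) _ _ h

theorem Deriv.seqR {A B B' : IBVF} (h : Deriv R p B B') : Deriv R p (A ◁ B) (A ◁ B') :=
  Relation.ReflTransGen.lift (A ◁ ·) (fun _ _ => Step.seqR) _ _ h

theorem Deriv.limpL {A A' B : IBVF} (h : Deriv R (!p) A A') : Deriv R p (A ⊸ B) (A' ⊸ B) :=
  Relation.ReflTransGen.lift (· ⊸ B) (fun _ _ => Step.limpL) _ _ h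

theorem Deriv.limpR {A B B' : IBVF} (h : Deriv R p B B') : Deriv R p (A ⊸ B) (A ⊸ B') :=
  Relation.ReflTransGen.lift (A ⊸ ·) (fun _ _ => Step.limpR) _ _ h

end Deriv

namespace IBV

theorem provable_limp_tens {X X' Y Y' : IBVF} (hX : IBVProvable (X ⊸ X'))
    (hY : IBVProvable (Y ⊸ Y')) : IBVProvable (X ⊗ Y ⊸ X' ⊗ Y') :=
  calc one ⟶∘ one ⊗ one := .rule (.u_down_tens _ _)
    _ ⟶∘ (X ⊸ X') ⊗ (Y ⊸ Y') := (Deriv.tensL hX).trans (.tensR hY)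
    _ ⟶∘ X ⊸ (X' ⊗ (Y ⊸ Y')) := .rule (.sR_pos _ _ _)
    _ ⟶∘ X ⊸ ((Y ⊸ Y') ⊗ X') := .limpR (.rule (.com_tens _ _ _))
    _ ⟶∘ X ⊸ Y ⊸ (Y' ⊗ X') := .limpR (.rule (.sR_pos _ _ _))
    _ ⟶∘ X ⊸ Y ⊸ (X' ⊗ Y') := .limpR (.limpR (.rule (.com_tens _ _ _)))
    _ ⟶∘ X ⊗ Y ⊸ X' ⊗ Y' := .rule (.ruc _ _ _ _)

theorem provable_limp_seq {X X' Y Y' : IBVF} (hX : IBVProvable (X ⊸ X'))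
    (hY : IBVProvable (Y ⊸ Y')) : IBVProvable ((X ◁ Y) ⊸ (X' ◁ Y')) :=
  calc one ⟶∘ one ◁ one := .rule (.u_down_seqL one)
    _ ⟶∘ (X ⊸ X') ◁ (Y ⊸ Y') := (Deriv.seqL hX).trans (.seqR hY)
    _ ⟶∘ (X ◁ Y) ⊸ (X' ◁ Y') := .rule (.q_down_pos _ _ _ _)

theorem provable_limp_limp {X X' Y Y' : IBVF} (hX : IBVProvable (X' ⊸ X))
    (hY : IBVProvable (Y ⊸ Y')) : IBVProvable ((X ⊸ Y) ⊸ (X' ⊸ Y')) :=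
  calc one ⟶∘ Y ⊸ Y' := hY
    _ ⟶∘ (one ⊸ Y) ⊸ Y' := .limpL (.rule (.u_down_limp _ _))
    _ ⟶∘ ((X' ⊸ X) ⊸ Y) ⊸ Y' := .limpL (.limpL hX)
    _ ⟶∘ (X' ⊗ (X ⊸ Y)) ⊸ Y' := .limpL (.rule (.sL_neg _ _ _))
    _ ⟶∘ ((X ⊸ Y) ⊗ X') ⊸ Y' := .limpL (.rule (.com_tens _ _ _))
    _ ⟶∘ (X ⊸ Y) ⊸ (X' ⊸ Y') := .rule (.cur _ _ _ _)

theorem provable_limp_self (X : IBVF) : IBVProvable (X ⊸ X) := by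
  induction X with
  | atom a => exact Deriv.rule (.ai_down a)
  | one => exact Deriv.rule (.u_down_limp true one)
  | tens X Y ihX ihY => exact provable_limp_tens ihX ihY
  | seq X Y ihX ihY => exact provable_limp_seq ihX ihY
  | limp X Y ihX ihY => exact provable_limp_limp ihX ihY

theorem provable_limp_fill {A B : IBVF} (h : IBVProvable (A ⊸ B)) (P : Ctx) :
    IBVProvable (bif P.pol then P.fill A ⊸ P.fill B else P.fill B ⊸ P.fill A) := by
  induction P <;> simp only [Ctx.pol, Ctx.fill]
  case hole => exact h
  case tensL Q C ih =>
    revert ih; cases Q.pol <;> exact (provable_limp_tens · (provable_limp_self C))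
  case tensR C Q ih =>
    revert ih; cases Q.pol <;> exact provable_limp_tens (provable_limp_self C)
  case seqL Q C ih =>
    revert ih; cases Q.pol <;> exact (provable_limp_seq · (provable_limp_self C))
  case seqR C Q ih =>
    revert ih; cases Q.pol <;> exact provable_limp_seq (provable_limp_self C)
  case limpL Q C ih =>
    revert ih; cases Q.pol <;> exact (provable_limp_limp · (provable_limp_self C))
  case limpR C Q ih =>
    revert ih; cases Q.pol <;> exact provable_limp_limp (provable_limp_self C)

theorem eq_one_of_deriv_one {p : Bool} {X : IBVF} (h : Deriv IBVRule p X one) : X = one := by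
  induction h using Relation.ReflTransGen.head_induction_on with
  | refl => rfl
  | head hs _ ih =>
    subst ih
    cases hs with
    | rule hr => cases hr

theorem ne_one_of_deriv {p : Bool} {X Y : IBVF} (h : Deriv IBVRule p X Y) (hX : X ≠ one) :
    Y ≠ one := by
  rintro rfl
  exact hX (eq_one_of_deriv_one h)

-- IBV can insert a unit `1 ⊗ X` in either polarity but never remove one, so the model works
-- with formulas up to such units.
def smartTens : IBVF → IBVF → IBVF
  | one, Y => Y
  | X, one => X
  | X, Y => X ⊗ Y

@[simp] theorem smartTens_one_left (Y : IBVF) : smartTens one Y = Y := rfl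

@[simp] theorem smartTens_one_right (X : IBVF) : smartTens X one = X := by
  cases X <;> rfl

theorem smartTens_of_ne_one {X Y : IBVF} (hX : X ≠ one) (hY : Y ≠ one) :
    smartTens X Y = X ⊗ Y := by
  cases X <;> cases Y <;> first | rfl | contradiction

section SmartTensDeriv

variable {p : Bool}

theorem deriv_smartTens_tens (X Y : IBVF) : Deriv IBVRule p (smartTens X Y) (X ⊗ Y) := by
  by_cases hX : X = one
  · subst hX
    exact .rule (.u_down_tens _ _)
  by_cases hY : Y = one
  · subst hY
    rw [smartTens_one_right]
    exact (Deriv.rule (.u_down_tens _ _)).trans (.rule (.com_tens _ _ _))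
  rw [smartTens_of_ne_one hX hY]
  exact .refl

theorem deriv_smartTens_comm (X Y : IBVF) : Deriv IBVRule p (smartTens X Y) (smartTens Y X) := by
  by_cases hX : X = one
  · subst hX
    simpa using Deriv.refl
  by_cases hY : Y = one
  · subst hY
    simpa using Deriv.refl
  rw [smartTens_of_ne_one hX hY, smartTens_of_ne_one hY hX]
  exact .rule (.com_tens _ _ _)

theorem deriv_smartTens_of_deriv_one {X' : IBVF} (hX : Deriv IBVRule p one X') (Y : IBVF) :
    Deriv IBVRule p Y (smartTens X' Y) := by
  by_cases hX' : X' = one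
  · subst hX'
    exact .refl
  by_cases hY : Y = one
  · subst hY
    simpa using hX
  rw [smartTens_of_ne_one hX' hY]
  exact (Deriv.rule (.u_down_tens _ _)).trans (.tensL hX)

theorem _root_.Deriv.smartTens {X X' Y Y' : IBVF} (hX : Deriv IBVRule p X X')
    (hY : Deriv IBVRule p Y Y') : Deriv IBVRule p (smartTens X Y) (smartTens X' Y') := by
  by_cases h₁ : X = one
  · subst h₁
    exact hY.trans (deriv_smartTens_of_deriv_one hX Y')
  by_cases h₂ : Y = one
  · subst h₂
    rw [smartTens_one_right]
    exact hX.trans ((deriv_smartTens_of_deriv_one hY X').trans (deriv_smartTens_comm _ _))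
  rw [smartTens_of_ne_one h₁ h₂,
    smartTens_of_ne_one (ne_one_of_deriv hX h₁) (ne_one_of_deriv hY h₂)]
  exact hX.tensL.trans hY.tensR

theorem deriv_smartTens_assoc (X Y Z : IBVF) :
    Deriv IBVRule p (smartTens (smartTens X Y) Z) (smartTens X (smartTens Y Z)) := by
  by_cases hX : X = one
  · subst hX
    simpa using Deriv.refl
  by_cases hY : Y = one
  · subst hY
    simpa using Deriv.refl
  by_cases hZ : Z = one
  · subst hZ
    simpa using Deriv.refl
  rw [smartTens_of_ne_one hX hY, smartTens_of_ne_one hY hZ,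
    smartTens_of_ne_one (by simp) hZ, smartTens_of_ne_one hX (by simp)]
  exact .rule (.asso_tens _ _ _ _)

theorem deriv_smartTens_assoc' (X Y Z : IBVF) :
    Deriv IBVRule p (smartTens X (smartTens Y Z)) (smartTens (smartTens X Y) Z) :=
  (deriv_smartTens_comm _ _).trans <| (deriv_smartTens_assoc _ _ _).trans <|
    (deriv_smartTens_comm _ _).trans <| (deriv_smartTens_assoc _ _ _).trans <|
      deriv_smartTens_comm _ _

end SmartTensDeriv

-- `1 ⊸ F` does not give back `F` in IBV, so an empty premise is treated separately.
def Entails : IBVF → IBVF → Prop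
  | one, F => IBVProvable F
  | X, F => IBVProvable (X ⊸ F)

section Entails

variable {X X' s t F F' G : IBVF}

theorem entails_iff_of_ne_one (hX : X ≠ one) : Entails X F ↔ IBVProvable (X ⊸ F) := by
  cases X <;> first | rfl | contradiction

theorem Entails.provable_limp (h : Entails X F) : IBVProvable (X ⊸ F) := by
  by_cases hX : X = one
  · subst hX
    exact (Deriv.rule (.u_down_limp _ _)).trans (.limpR h)
  exact (entails_iff_of_ne_one hX).1 h

theorem entails_self (X : IBVF) : Entails X X := by
  by_cases hX : X = one
  · subst hX
    exact Deriv.refl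
  exact (entails_iff_of_ne_one hX).2 (provable_limp_self X)

theorem Entails.of_deriv_left (hX : X ⟶• X') (h : Entails X F) : Entails X' F := by
  by_cases hX' : X' = one
  · subst hX'
    obtain rfl := eq_one_of_deriv_one hX
    exact h
  exact (entails_iff_of_ne_one hX').2 (h.provable_limp.trans (.limpL hX))

theorem Entails.deriv_right (h : Entails X F) (hF : F ⟶∘ F') : Entails X F' := by
  by_cases hX : X = one
  · subst hX
    exact Deriv.trans h hF
  rw [entails_iff_of_ne_one hX] at h ⊢
  exact h.trans (.limpR hF)

theorem Entails.limp_of_smartTens (h : Entails (smartTens X F) G) : Entails X (F ⊸ G) := by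
  by_cases hX : X = one
  · subst hX
    exact Entails.provable_limp h
  by_cases hF : F = one
  · subst hF
    rw [smartTens_one_right] at h
    exact h.deriv_right (.rule (.u_down_limp _ _))
  rw [smartTens_of_ne_one hX hF, entails_iff_of_ne_one (by simp)] at h
  exact (entails_iff_of_ne_one hX).2 (h.trans (.rule (.cur _ _ _ _)))

theorem deriv_tens_of_provable (hG : IBVProvable G) (F : IBVF) : F ⟶∘ G ⊗ F :=
  (Deriv.rule (.u_down_tens _ _)).trans (.tensL hG)

theorem Entails.smartTens (hs : Entails s F) (ht : Entails t G) :
    Entails (smartTens s t) (F ⊗ G) := by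
  by_cases hs₁ : s = one
  · subst hs₁
    exact ht.deriv_right (deriv_tens_of_provable hs G)
  by_cases ht₁ : t = one
  · subst ht₁
    rw [smartTens_one_right]
    exact hs.deriv_right ((deriv_tens_of_provable ht F).trans (.rule (.com_tens _ _ _)))
  rw [smartTens_of_ne_one hs₁ ht₁, entails_iff_of_ne_one (by simp)]
  exact provable_limp_tens hs.provable_limp ht.provable_limp

theorem Entails.seq (hs : Entails s F) (ht : Entails t G) : Entails (s ◁ t) (F ◁ G) :=
  (entails_iff_of_ne_one (by simp)).2 (provable_limp_seq hs.provable_limp ht.provable_limp)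

theorem Entails.seq_of_provable_left (hF : IBVProvable F) (ht : Entails t G) :
    Entails t (F ◁ G) :=
  ht.deriv_right ((Deriv.rule (.u_down_seqL _)).trans (.seqL hF))

theorem Entails.seq_of_provable_right (hs : Entails s F) (hG : IBVProvable G) :
    Entails s (F ◁ G) :=
  hs.deriv_right ((Deriv.rule (.u_down_seqR _)).trans (.seqR hG))

theorem deriv_smartTens_limp (h : Entails X F) (G : IBVF) : G ⟶• smartTens (F ⊸ G) X := by
  by_cases hX : X = one
  · subst hX
    exact (Deriv.rule (.u_down_limp _ _)).trans (.limpL h)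
  rw [smartTens_of_ne_one (by simp) hX]
  calc G ⟶• one ⊸ G := .rule (.u_down_limp _ _)
    _ ⟶• (X ⊸ F) ⊸ G := .limpL ((entails_iff_of_ne_one hX).1 h)
    _ ⟶• X ⊗ (F ⊸ G) := .rule (.sL_neg _ _ _)
    _ ⟶• (F ⊸ G) ⊗ X := .rule (.com_tens _ _ _)

end Entails

def NegClosed (T : Set IBVF) : Prop := ∀ ⦃X Y : IBVF⦄, X ⟶• Y → X ∈ T → Y ∈ T

def negClosure (S : Set IBVF) : Set IBVF := {Y | ∃ X ∈ S, X ⟶• Y}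

def interp : IBVF → Set IBVF
  | atom a => negClosure {atom a}
  | one => negClosure {one}
  | tens F G => negClosure (Set.image2 smartTens (interp F) (interp G))
  -- no unit can be inserted into `◁` negatively, so its unit cases are listed explicitly
  | seq F G => negClosure (Set.image2 seq (interp F) (interp G)) ∪
      {X | one ∈ interp F ∧ X ∈ interp G} ∪ {X | X ∈ interp F ∧ one ∈ interp G}
  | limp F G => {X | ∀ Y ∈ interp F, smartTens X Y ∈ interp G}

section NegClosed

variable {S T : Set IBVF}

theorem NegClosed.preimage (hT : NegClosed T) {f : IBVF → IBVF}
    (hf : ∀ ⦃X Y⦄, X ⟶• Y → f X ⟶• f Y) : NegClosed (f ⁻¹' T) :=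
  fun _ _ h hX => hT (hf h) hX

theorem negClosed_negClosure (S : Set IBVF) : NegClosed (negClosure S) :=
  fun _ _ h ⟨Z, hZ, hZX⟩ => ⟨Z, hZ, hZX.trans h⟩

theorem subset_negClosure : S ⊆ negClosure S := fun X hX => ⟨X, hX, .refl⟩

theorem negClosure_subset (hT : NegClosed T) (h : S ⊆ T) : negClosure S ⊆ T :=
  fun _ ⟨_, hZ, hZX⟩ => hT hZX (h hZ)

theorem negClosure_mono (h : S ⊆ T) : negClosure S ⊆ negClosure T :=
  negClosure_subset (negClosed_negClosure T) (h.trans subset_negClosure)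

end NegClosed

section Interp

variable {F G X Y s t : IBVF}

theorem negClosed_interp (F : IBVF) : NegClosed (interp F) := by
  induction F with
  | atom | one | tens => exact negClosed_negClosure _
  | seq F G ihF ihG =>
    rintro X Y h ((hX | ⟨h₁, hX⟩) | ⟨hX, h₁⟩)
    · exact .inl (.inl (negClosed_negClosure _ h hX))
    · exact .inl (.inr ⟨h₁, ihG h hX⟩)
    · exact .inr ⟨ihF h hX, h₁⟩
  | limp F G _ ihG => exact fun _ _ h hX Z hZ => ihG (Deriv.smartTens h .refl) (hX Z hZ)

theorem mem_interp_of_deriv (hX : X ∈ interp F) (h : X ⟶• Y) : Y ∈ interp F :=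
  negClosed_interp F h hX

theorem one_mem_interp_one : one ∈ interp one := subset_negClosure rfl

theorem mem_interp_one : X ∈ interp one ↔ one ⟶• X := by
  simp [interp, negClosure]

theorem mem_interp_limp : X ∈ interp (F ⊸ G) ↔ interp F ⊆ smartTens X ⁻¹' interp G :=
  Iff.rfl

theorem smartTens_mem_interp_tens (hs : s ∈ interp F) (ht : t ∈ interp G) :
    smartTens s t ∈ interp (F ⊗ G) :=
  subset_negClosure (Set.mem_image2_of_mem hs ht)

theorem tens_mem_interp_tens (hs : s ∈ interp F) (ht : t ∈ interp G) :
    s ⊗ t ∈ interp (F ⊗ G) :=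
  mem_interp_of_deriv (smartTens_mem_interp_tens hs ht) (deriv_smartTens_tens s t)

theorem seq_mem_interp_seq (hs : s ∈ interp F) (ht : t ∈ interp G) :
    s ◁ t ∈ interp (F ◁ G) :=
  .inl (.inl (subset_negClosure (Set.mem_image2_of_mem hs ht)))

theorem mem_interp_seq_of_one_left (h₁ : one ∈ interp F) (ht : t ∈ interp G) :
    t ∈ interp (F ◁ G) :=
  .inl (.inr ⟨h₁, ht⟩)

theorem mem_interp_seq_of_one_right (hs : s ∈ interp F) (h₁ : one ∈ interp G) :
    s ∈ interp (F ◁ G) :=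
  .inr ⟨hs, h₁⟩

theorem one_mem_interp_seq (h : one ∈ interp (F ◁ G)) :
    one ∈ interp F ∧ one ∈ interp G := by
  rcases h with (⟨_, ⟨s, -, t, -, rfl⟩, h⟩ | h) | h
  · cases eq_one_of_deriv_one h
  · exact h
  · exact h

theorem interp_tens_subset {T : Set IBVF} (hT : NegClosed T)
    (h : ∀ s ∈ interp F, ∀ t ∈ interp G, smartTens s t ∈ T) : interp (F ⊗ G) ⊆ T :=
  negClosure_subset hT (Set.image2_subset_iff.2 h)

theorem interp_seq_subset {T : Set IBVF} (hT : NegClosed T)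
    (h : ∀ s ∈ interp F, ∀ t ∈ interp G, s ◁ t ∈ T)
    (hF : one ∈ interp F → interp G ⊆ T) (hG : one ∈ interp G → interp F ⊆ T) :
    interp (F ◁ G) ⊆ T := by
  rintro X ((hX | ⟨h₁, hX⟩) | ⟨hX, h₁⟩)
  · exact negClosure_subset hT (Set.image2_subset_iff.2 h) hX
  · exact hF h₁ hX
  · exact hG h₁ hX

theorem smartTens_mem_interp_seq (hs : s ∈ interp F) (ht : t ∈ interp G) :
    smartTens s t ∈ interp (F ◁ G) := by
  by_cases hs₁ : s = one
  · subst hs₁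
    exact mem_interp_seq_of_one_left hs ht
  by_cases ht₁ : t = one
  · subst ht₁
    rw [smartTens_one_right]
    exact mem_interp_seq_of_one_right hs ht
  rw [smartTens_of_ne_one hs₁ ht₁]
  exact mem_interp_of_deriv (seq_mem_interp_seq hs ht) (.rule (.ref_neg _ _))

theorem mem_interp_smartTens_comm (h : smartTens X Y ∈ interp F) : smartTens Y X ∈ interp F :=
  mem_interp_of_deriv h (deriv_smartTens_comm X Y)

theorem mem_interp_of_limp_of_one_mem (hX : X ∈ interp (F ⊸ G)) (h₁ : one ∈ interp F) :
    X ∈ interp G := by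
  simpa using hX one h₁

theorem mem_interp_tens_of_one_left (h₁ : one ∈ interp F) (ht : t ∈ interp G) :
    t ∈ interp (F ⊗ G) :=
  smartTens_mem_interp_tens h₁ ht

theorem mem_interp_tens_of_one_right (hs : s ∈ interp F) (h₁ : one ∈ interp G) :
    s ∈ interp (F ⊗ G) := by
  simpa using smartTens_mem_interp_tens hs h₁

theorem negClosed_interp_preimage_smartTens (F X : IBVF) :
    NegClosed (smartTens X ⁻¹' interp F) :=
  (negClosed_interp F).preimage fun _ _ h => Deriv.smartTens .refl h

end Interp

section Adequacy

variable {F X : IBVF}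

theorem mem_interp_self_and_entails (F : IBVF) :
    F ∈ interp F ∧ ∀ X ∈ interp F, Entails X F := by
  induction F with
  | atom | one =>
    exact ⟨subset_negClosure rfl,
      fun _ ⟨_, h₁, h⟩ => h₁ ▸ (entails_self _).of_deriv_left h⟩
  | tens F G ihF ihG =>
    refine ⟨tens_mem_interp_tens ihF.1 ihG.1, ?_⟩
    rintro X ⟨_, ⟨s, hs, t, ht, rfl⟩, h⟩
    exact ((ihF.2 s hs).smartTens (ihG.2 t ht)).of_deriv_left h
  | seq F G ihF ihG =>
    refine ⟨seq_mem_interp_seq ihF.1 ihG.1, ?_⟩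
    rintro X ((⟨_, ⟨s, hs, t, ht, rfl⟩, h⟩ | ⟨h₁, hX⟩) | ⟨hX, h₁⟩)
    · exact ((ihF.2 s hs).seq (ihG.2 t ht)).of_deriv_left h
    · exact Entails.seq_of_provable_left (ihF.2 one h₁) (ihG.2 X hX)
    · exact Entails.seq_of_provable_right (ihF.2 X hX) (ihG.2 one h₁)
  | limp F G ihF ihG =>
    refine ⟨fun Y hY => mem_interp_of_deriv ihG.1 (deriv_smartTens_limp (ihF.2 Y hY) G), ?_⟩
    exact fun X hX => (ihG.2 _ (hX F ihF.1)).limp_of_smartTens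

theorem Entails.of_mem_interp (h : X ∈ interp F) : Entails X F :=
  (mem_interp_self_and_entails F).2 X h

end Adequacy

section Soundness

variable {F G a c x y : IBVF}

theorem smartTens_seq_mem_interp_seq_left (hxa : smartTens x a ∈ interp F)
    (hc : c ∈ interp G) : smartTens x (a ◁ c) ∈ interp (F ◁ G) := by
  by_cases hx : x = one
  · subst hx
    exact seq_mem_interp_seq hxa hc
  rw [smartTens_of_ne_one hx (by simp)]
  have hxa' := mem_interp_of_deriv hxa (deriv_smartTens_tens x a)
  exact mem_interp_of_deriv (seq_mem_interp_seq hxa' hc) (.rule (.sqL_neg _ _ _))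

theorem smartTens_seq_mem_interp_seq_right (ha : a ∈ interp F)
    (hxc : smartTens x c ∈ interp G) : smartTens x (a ◁ c) ∈ interp (F ◁ G) := by
  by_cases hx : x = one
  · subst hx
    exact seq_mem_interp_seq ha hxc
  rw [smartTens_of_ne_one hx (by simp)]
  have hxc' := mem_interp_of_deriv hxc (deriv_smartTens_tens x c)
  exact mem_interp_of_deriv (seq_mem_interp_seq ha hxc') (.rule (.sqR_neg _ _ _))

theorem smartTens_seq_seq_mem_interp_seq (hxa : smartTens x a ∈ interp F)
    (hyc : smartTens y c ∈ interp G) : smartTens (x ◁ y) (a ◁ c) ∈ interp (F ◁ G) := by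
  rw [smartTens_of_ne_one (by simp) (by simp)]
  have hxa' := mem_interp_of_deriv hxa (deriv_smartTens_tens x a)
  have hyc' := mem_interp_of_deriv hyc (deriv_smartTens_tens y c)
  exact mem_interp_of_deriv (seq_mem_interp_seq hxa' hyc') (.rule (.q_down_neg _ _ _ _))

theorem interp_one_subset_limp_self (F : IBVF) : interp one ⊆ interp (F ⊸ F) :=
  fun _ hX Y hY => mem_interp_of_deriv hY (deriv_smartTens_of_deriv_one (mem_interp_one.1 hX) Y)

theorem interp_subset_seq_one_left (F : IBVF) : interp F ⊆ interp (one ◁ F) :=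
  fun _ => mem_interp_seq_of_one_left one_mem_interp_one

theorem interp_subset_seq_one_right (F : IBVF) : interp F ⊆ interp (F ◁ one) :=
  fun _ hX => mem_interp_seq_of_one_right hX one_mem_interp_one

theorem interp_subset_tens_one (F : IBVF) : interp F ⊆ interp (one ⊗ F) :=
  fun _ => mem_interp_tens_of_one_left one_mem_interp_one

theorem interp_tens_one_subset (F : IBVF) : interp (one ⊗ F) ⊆ interp F :=
  interp_tens_subset (negClosed_interp F) fun _ hu _ ha =>
    mem_interp_of_deriv ha (deriv_smartTens_of_deriv_one (mem_interp_one.1 hu) _)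

theorem interp_subset_limp_one (F : IBVF) : interp F ⊆ interp (one ⊸ F) :=
  fun X hX _ hY => mem_interp_of_deriv hX
    ((deriv_smartTens_of_deriv_one (mem_interp_one.1 hY) X).trans (deriv_smartTens_comm _ _))

theorem interp_limp_one_subset (F : IBVF) : interp (one ⊸ F) ⊆ interp F :=
  fun _ hX => mem_interp_of_limp_of_one_mem hX one_mem_interp_one

theorem interp_subset_ref (F G : IBVF) : interp (F ⊗ G) ⊆ interp (F ◁ G) :=
  interp_tens_subset (negClosed_interp _) fun _ hs _ ht => smartTens_mem_interp_seq hs ht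

theorem interp_subset_com (F G : IBVF) : interp (F ⊗ G) ⊆ interp (G ⊗ F) :=
  interp_tens_subset (negClosed_interp _) fun _ hs _ ht =>
    mem_interp_smartTens_comm (smartTens_mem_interp_tens ht hs)

theorem interp_subset_assoc (F G H : IBVF) :
    interp ((F ⊗ G) ⊗ H) ⊆ interp (F ⊗ (G ⊗ H)) :=
  interp_tens_subset (negClosed_interp _) fun _ hw c hc =>
    interp_tens_subset (T := (smartTens · c) ⁻¹' interp (F ⊗ (G ⊗ H)))
      ((negClosed_interp _).preimage fun _ _ h => h.smartTens .refl)
      (fun a ha b hb => mem_interp_of_deriv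
        (smartTens_mem_interp_tens ha (smartTens_mem_interp_tens hb hc))
        (deriv_smartTens_assoc' a b c)) hw

theorem interp_subset_assoc' (F G H : IBVF) :
    interp (F ⊗ (G ⊗ H)) ⊆ interp ((F ⊗ G) ⊗ H) :=
  interp_tens_subset (negClosed_interp _) fun a ha _ hw =>
    interp_tens_subset (negClosed_interp_preimage_smartTens _ a)
      (fun b hb c hc => mem_interp_of_deriv
        (smartTens_mem_interp_tens (smartTens_mem_interp_tens ha hb) hc)
        (deriv_smartTens_assoc a b c)) hw

theorem interp_subset_cur (F G H : IBVF) : interp ((F ⊗ G) ⊸ H) ⊆ interp (F ⊸ G ⊸ H) :=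
  fun V hV _ hY _ hZ =>
    mem_interp_of_deriv (hV _ (smartTens_mem_interp_tens hY hZ)) (deriv_smartTens_assoc' V _ _)

theorem interp_subset_ruc (F G H : IBVF) : interp (F ⊸ G ⊸ H) ⊆ interp ((F ⊗ G) ⊸ H) :=
  fun V hV => mem_interp_limp.2 <| interp_tens_subset (negClosed_interp_preimage_smartTens _ V)
    fun _ hY _ hZ => mem_interp_of_deriv (hV _ hY _ hZ) (deriv_smartTens_assoc V _ _)

theorem interp_subset_sL (F G H : IBVF) : interp (F ⊗ (G ⊸ H)) ⊆ interp ((F ⊸ G) ⊸ H) :=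
  interp_tens_subset (negClosed_interp _) fun a ha f hf g hg =>
    mem_interp_of_deriv (hf _ (hg a ha)) <|
      (Deriv.smartTens .refl (deriv_smartTens_comm g a)).trans <|
        (deriv_smartTens_assoc' f a g).trans (Deriv.smartTens (deriv_smartTens_comm f a) .refl)

theorem interp_subset_sR (F G H : IBVF) : interp ((F ⊸ G) ⊗ H) ⊆ interp (F ⊸ (G ⊗ H)) :=
  interp_tens_subset (negClosed_interp _) fun f hf c hc Y hY =>
    mem_interp_of_deriv (smartTens_mem_interp_tens (hf Y hY) hc) <|
      (deriv_smartTens_assoc f Y c).trans <|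
        (Deriv.smartTens .refl (deriv_smartTens_comm Y c)).trans (deriv_smartTens_assoc' f c Y)

theorem interp_subset_sqL_pos (F G H : IBVF) :
    interp ((F ⊸ G) ◁ H) ⊆ interp (F ⊸ (G ◁ H)) :=
  interp_seq_subset (negClosed_interp _)
    (fun _ hf _ hc Y hY => mem_interp_smartTens_comm <|
      smartTens_seq_mem_interp_seq_left (mem_interp_smartTens_comm (hf Y hY)) hc)
    (fun h₁ _ hc Y hY => mem_interp_smartTens_comm (smartTens_mem_interp_seq (h₁ Y hY) hc))
    (fun h₁ _ hf Y hY => mem_interp_seq_of_one_right (hf Y hY) h₁)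

theorem interp_subset_sqR_pos (F G H : IBVF) :
    interp (G ◁ (F ⊸ H)) ⊆ interp (F ⊸ (G ◁ H)) :=
  interp_seq_subset (negClosed_interp _)
    (fun _ hb _ hg Y hY => mem_interp_smartTens_comm <|
      smartTens_seq_mem_interp_seq_right hb (mem_interp_smartTens_comm (hg Y hY)))
    (fun h₁ _ hg Y hY => mem_interp_seq_of_one_left h₁ (hg Y hY))
    (fun h₁ _ hb Y hY => smartTens_mem_interp_seq hb (h₁ Y hY))

theorem interp_subset_q_pos (F G H K : IBVF) :
    interp ((F ⊸ G) ◁ (H ⊸ K)) ⊆ interp ((F ◁ H) ⊸ (G ◁ K)) :=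
  interp_seq_subset (negClosed_interp _)
    (fun _ hf _ hg => mem_interp_limp.2 <|
      interp_seq_subset (negClosed_interp_preimage_smartTens _ _)
        (fun _ ha _ hc => smartTens_seq_seq_mem_interp_seq (hf _ ha) (hg _ hc))
        (fun h₁ _ hW => mem_interp_smartTens_comm <| smartTens_seq_mem_interp_seq_right
          (mem_interp_of_limp_of_one_mem hf h₁) (mem_interp_smartTens_comm (hg _ hW)))
        (fun h₁ _ hW => mem_interp_smartTens_comm <| smartTens_seq_mem_interp_seq_left
          (mem_interp_smartTens_comm (hf _ hW)) (mem_interp_of_limp_of_one_mem hg h₁)))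
    (fun h₁ _ hx => mem_interp_limp.2 <|
      interp_seq_subset (negClosed_interp_preimage_smartTens _ _)
        (fun _ ha _ hc => smartTens_seq_mem_interp_seq_right (h₁ _ ha) (hx _ hc))
        (fun h₁' _ hW => mem_interp_seq_of_one_left (h₁ _ h₁') (hx _ hW))
        (fun h₁' _ hW => mem_interp_smartTens_comm <|
          smartTens_mem_interp_seq (h₁ _ hW) (mem_interp_of_limp_of_one_mem hx h₁')))
    (fun h₁ _ hx => mem_interp_limp.2 <|
      interp_seq_subset (negClosed_interp_preimage_smartTens _ _)
        (fun _ ha _ hc => smartTens_seq_mem_interp_seq_left (hx _ ha) (h₁ _ hc))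
        (fun h₁' _ hW =>
          smartTens_mem_interp_seq (mem_interp_of_limp_of_one_mem hx h₁') (h₁ _ hW))
        (fun h₁' _ hW => mem_interp_seq_of_one_right (hx _ hW) (h₁ _ h₁')))

theorem interp_subset_sqL_neg (F G H : IBVF) :
    interp (F ⊗ (G ◁ H)) ⊆ interp ((F ⊗ G) ◁ H) :=
  interp_tens_subset (negClosed_interp _) fun a ha _ hw =>
    interp_seq_subset (negClosed_interp_preimage_smartTens ((F ⊗ G) ◁ H) a)
      (fun _ hb _ hc => smartTens_seq_mem_interp_seq_left (smartTens_mem_interp_tens ha hb) hc)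
      (fun h₁ _ hw => smartTens_mem_interp_seq (mem_interp_tens_of_one_right ha h₁) hw)
      (fun h₁ _ hw => mem_interp_seq_of_one_right (smartTens_mem_interp_tens ha hw) h₁) hw

theorem interp_subset_sqR_neg (F G H : IBVF) :
    interp (F ⊗ (G ◁ H)) ⊆ interp (G ◁ (F ⊗ H)) :=
  interp_tens_subset (negClosed_interp _) fun a ha _ hw =>
    interp_seq_subset (negClosed_interp_preimage_smartTens (G ◁ (F ⊗ H)) a)
      (fun _ hb _ hc => smartTens_seq_mem_interp_seq_right hb (smartTens_mem_interp_tens ha hc))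
      (fun h₁ _ hw => mem_interp_seq_of_one_left h₁ (smartTens_mem_interp_tens ha hw))
      (fun h₁ _ hw => mem_interp_smartTens_comm <|
        smartTens_mem_interp_seq hw (mem_interp_tens_of_one_right ha h₁)) hw

theorem interp_subset_q_neg (F G H K : IBVF) :
    interp ((F ◁ H) ⊗ (G ◁ K)) ⊆ interp ((F ⊗ G) ◁ (H ⊗ K)) := by
  refine interp_tens_subset (negClosed_interp _) fun u hu v hv => ?_
  suffices interp (F ◁ H) ⊆ interp ((G ◁ K) ⊸ ((F ⊗ G) ◁ (H ⊗ K))) from this hu v hv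
  refine interp_seq_subset (negClosed_interp _) ?_ ?_ ?_
  · intro _ ha _ hc
    refine mem_interp_limp.2 (interp_seq_subset (negClosed_interp_preimage_smartTens _ _) ?_ ?_ ?_)
    · exact fun _ hb _ hd => smartTens_seq_seq_mem_interp_seq
        (smartTens_mem_interp_tens ha hb) (smartTens_mem_interp_tens hc hd)
    · exact fun h₁ _ hv => mem_interp_smartTens_comm <| smartTens_seq_mem_interp_seq_right
        (mem_interp_tens_of_one_right ha h₁)
        (mem_interp_smartTens_comm (smartTens_mem_interp_tens hc hv))
    · exact fun h₁ _ hv => mem_interp_smartTens_comm <| smartTens_seq_mem_interp_seq_left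
        (mem_interp_smartTens_comm (smartTens_mem_interp_tens ha hv))
        (mem_interp_tens_of_one_right hc h₁)
  · intro h₁ u hu
    refine mem_interp_limp.2 (interp_seq_subset (negClosed_interp_preimage_smartTens _ u) ?_ ?_ ?_)
    · exact fun _ hb _ hd => smartTens_seq_mem_interp_seq_right
        (mem_interp_tens_of_one_left h₁ hb) (smartTens_mem_interp_tens hu hd)
    · exact fun h₁' _ hv => mem_interp_seq_of_one_left
        (mem_interp_tens_of_one_left h₁ h₁') (smartTens_mem_interp_tens hu hv)
    · exact fun h₁' _ hv => mem_interp_smartTens_comm <| smartTens_mem_interp_seq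
        (mem_interp_tens_of_one_left h₁ hv) (mem_interp_tens_of_one_right hu h₁')
  · intro h₁ u hu
    refine mem_interp_limp.2 (interp_seq_subset (negClosed_interp_preimage_smartTens _ u) ?_ ?_ ?_)
    · exact fun _ hb _ hd => smartTens_seq_mem_interp_seq_left
        (smartTens_mem_interp_tens hu hb) (mem_interp_tens_of_one_left h₁ hd)
    · exact fun h₁' _ hv => smartTens_mem_interp_seq
        (mem_interp_tens_of_one_right hu h₁') (mem_interp_tens_of_one_left h₁ hv)
    · exact fun h₁' _ hv => mem_interp_seq_of_one_right
        (smartTens_mem_interp_tens hu hv) (mem_interp_tens_of_one_left h₁ h₁')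

theorem interp_subset_seq_assoc (F G H : IBVF) :
    interp ((F ◁ G) ◁ H) ⊆ interp (F ◁ (G ◁ H)) := by
  refine interp_seq_subset (negClosed_interp _)
    (fun w hw c hc => ?_) (fun h₁ _ hc => ?_) fun h₁ => ?_
  · refine interp_seq_subset (T := (· ◁ c) ⁻¹' interp (F ◁ (G ◁ H)))
      ((negClosed_interp _).preimage fun _ _ h => h.seqL) ?_ ?_ ?_ hw
    · exact fun _ ha _ hb => mem_interp_of_deriv
        (seq_mem_interp_seq ha (seq_mem_interp_seq hb hc)) (.rule (.assoR_seq _ _ _ _))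
    · exact fun h₁ _ hw => mem_interp_seq_of_one_left h₁ (seq_mem_interp_seq hw hc)
    · exact fun h₁ _ hw => seq_mem_interp_seq hw (mem_interp_seq_of_one_left h₁ hc)
  · obtain ⟨h₁F, h₁G⟩ := one_mem_interp_seq h₁
    exact mem_interp_seq_of_one_left h₁F (mem_interp_seq_of_one_left h₁G hc)
  · refine interp_seq_subset (negClosed_interp _) ?_ ?_ ?_
    · exact fun _ ha _ hb => seq_mem_interp_seq ha (mem_interp_seq_of_one_right hb h₁)
    · exact fun h₁' _ hb =>
        mem_interp_seq_of_one_left h₁' (mem_interp_seq_of_one_right hb h₁)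
    · exact fun h₁' _ ha =>
        mem_interp_seq_of_one_right ha (mem_interp_seq_of_one_left h₁' h₁)

theorem interp_subset_seq_assoc' (F G H : IBVF) :
    interp (F ◁ (G ◁ H)) ⊆ interp ((F ◁ G) ◁ H) := by
  refine interp_seq_subset (negClosed_interp _)
    (fun a ha w hw => ?_) (fun h₁ => ?_) fun h₁ _ ha => ?_
  · refine interp_seq_subset (T := (a ◁ ·) ⁻¹' interp ((F ◁ G) ◁ H))
      ((negClosed_interp _).preimage fun _ _ h => h.seqR) ?_ ?_ ?_ hw
    · exact fun _ hb _ hc => mem_interp_of_deriv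
        (seq_mem_interp_seq (seq_mem_interp_seq ha hb) hc) (.rule (.assoL_seq _ _ _ _))
    · exact fun h₁ _ hw => seq_mem_interp_seq (mem_interp_seq_of_one_right ha h₁) hw
    · exact fun h₁ _ hw => mem_interp_seq_of_one_right (seq_mem_interp_seq ha hw) h₁
  · refine interp_seq_subset (negClosed_interp _) ?_ ?_ ?_
    · exact fun _ hb _ hc => seq_mem_interp_seq (mem_interp_seq_of_one_left h₁ hb) hc
    · exact fun h₁' _ hc => mem_interp_seq_of_one_left (mem_interp_seq_of_one_left h₁ h₁') hc
    · exact fun h₁' _ hb =>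
        mem_interp_seq_of_one_right (mem_interp_seq_of_one_left h₁ hb) h₁'
  · obtain ⟨h₁G, h₁H⟩ := one_mem_interp_seq h₁
    exact mem_interp_seq_of_one_right (mem_interp_seq_of_one_right ha h₁G) h₁H

theorem interp_tens_mono {F F' G G' : IBVF} (hF : interp F ⊆ interp F')
    (hG : interp G ⊆ interp G') : interp (F ⊗ G) ⊆ interp (F' ⊗ G') :=
  negClosure_mono (Set.image2_subset hF hG)

theorem interp_seq_mono {F F' G G' : IBVF} (hF : interp F ⊆ interp F')
    (hG : interp G ⊆ interp G') : interp (F ◁ G) ⊆ interp (F' ◁ G') := by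
  rintro X ((hX | ⟨h₁, hX⟩) | ⟨hX, h₁⟩)
  · exact .inl (.inl (negClosure_mono (Set.image2_subset hF hG) hX))
  · exact mem_interp_seq_of_one_left (hF h₁) (hG hX)
  · exact mem_interp_seq_of_one_right (hF hX) (hG h₁)

theorem interp_limp_mono {F F' G G' : IBVF} (hF : interp F' ⊆ interp F)
    (hG : interp G ⊆ interp G') : interp (F ⊸ G) ⊆ interp (F' ⊸ G') :=
  fun _ hX Y hY => hG (hX Y (hF hY))

theorem interp_subset_of_rule {p : Bool} {X Y : IBVF} (h : IBVRule p X Y) :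
    bif p then interp X ⊆ interp Y else interp Y ⊆ interp X := by
  cases h with
  | ai_down => exact interp_one_subset_limp_self _
  | u_down_seqL => exact interp_subset_seq_one_left _
  | u_down_seqR => exact interp_subset_seq_one_right _
  | ref_pos | ref_neg => exact interp_subset_ref _ _
  | sL_pos | sL_neg => exact interp_subset_sL _ _ _
  | sR_pos | sR_neg => exact interp_subset_sR _ _ _
  | sqL_pos => exact interp_subset_sqL_pos _ _ _
  | sqR_pos => exact interp_subset_sqR_pos _ _ _
  | sqL_neg => exact interp_subset_sqL_neg _ _ _
  | sqR_neg => exact interp_subset_sqR_neg _ _ _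
  | q_down_pos => exact interp_subset_q_pos _ _ _ _
  | q_down_neg => exact interp_subset_q_neg _ _ _ _
  | com_tens p => cases p <;> exact interp_subset_com _ _
  | asso_tens p =>
    cases p
    · exact interp_subset_assoc' _ _ _
    · exact interp_subset_assoc _ _ _
  | assoL_seq p =>
    cases p
    · exact interp_subset_seq_assoc' _ _ _
    · exact interp_subset_seq_assoc _ _ _
  | assoR_seq p =>
    cases p
    · exact interp_subset_seq_assoc _ _ _
    · exact interp_subset_seq_assoc' _ _ _
  | u_down_tens p =>
    cases p
    · exact interp_tens_one_subset _
    · exact interp_subset_tens_one _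
  | u_down_limp p =>
    cases p
    · exact interp_limp_one_subset _
    · exact interp_subset_limp_one _
  | cur p =>
    cases p
    · exact interp_subset_ruc _ _ _
    · exact interp_subset_cur _ _ _
  | ruc p =>
    cases p
    · exact interp_subset_cur _ _ _
    · exact interp_subset_ruc _ _ _

theorem interp_subset_of_step {p : Bool} {X Y : IBVF} (h : Step IBVRule p X Y) :
    bif p then interp X ⊆ interp Y else interp Y ⊆ interp X := by
  induction h with
  | rule h => exact interp_subset_of_rule h
  | @tensL p _ _ _ _ ih => revert ih; cases p <;> exact (interp_tens_mono · subset_rfl)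
  | @tensR p _ _ _ _ ih => revert ih; cases p <;> exact interp_tens_mono subset_rfl
  | @seqL p _ _ _ _ ih => revert ih; cases p <;> exact (interp_seq_mono · subset_rfl)
  | @seqR p _ _ _ _ ih => revert ih; cases p <;> exact interp_seq_mono subset_rfl
  | @limpL p _ _ _ _ ih => revert ih; cases p <;> exact (interp_limp_mono · subset_rfl)
  | @limpR p _ _ _ _ ih => revert ih; cases p <;> exact interp_limp_mono subset_rfl

theorem interp_subset_of_deriv {X Y : IBVF} (h : X ⟶∘ Y) : interp X ⊆ interp Y := by
  induction h with
  | refl => exact subset_rfl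
  | tail _ hs ih => exact ih.trans (interp_subset_of_step hs)

end Soundness

theorem _root_.IBVProvable.mp {F G : IBVF} (hFG : IBVProvable (F ⊸ G)) (hF : IBVProvable F) :
    IBVProvable G :=
  have hF' : one ∈ interp F := interp_subset_of_deriv hF one_mem_interp_one
  Entails.of_mem_interp (interp_subset_of_deriv hFG one_mem_interp_one one hF')

end IBV

/-- For fixed formulas A and B, the following are equivalent in IBV:
    (1) A⊸B is provable; (2) P[A]⊸P[B] is provable for every positive context P;
    (3) N[B]⊸N[A] is provable for every negative context N. -/
theorem IBV.context_monotone_tfae (A B : IBVF) :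
    (IBVProvable (limp A B) ↔
      ∀ P : Ctx, P.pol = true → IBVProvable (limp (P.fill A) (P.fill B))) ∧
    (IBVProvable (limp A B) ↔
      ∀ N : Ctx, N.pol = false → IBVProvable (limp (N.fill B) (N.fill A))) := by
  refine ⟨⟨fun h P hP => ?_, fun h => h .hole rfl⟩, ⟨fun h N hN => ?_, fun h => ?_⟩⟩
  · simpa [hP] using provable_limp_fill h P
  · simpa [hN] using provable_limp_fill h N
  · exact IBVProvable.mp (h (.limpL .hole B) rfl) (provable_limp_self B)
end
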